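/- Let Γ be a connected G-arc-transitive graph such that G is bi-quasiprimitive on V(Γ); then Γ is bipartite, with bipartite halves Δ_0 and Δ_1. If the subgroup G^+ of G stabilizing both halves setwise acts unfaithfully on Δ_0 and unfaithfully on Δ_1, then Γ is isomorphic to the complete bipartite graph K_{n,n} for some n ≥ 2. -/

import Mathlib

/-!
The kernels `G_(Δ₀)` and `G_(Δ₁)` of `G` on the two halves generate a subgroup `N`, normal in
`G` because every element of `G` preserves or swaps the halves. `N` is nontrivial and fixes both
halves setwise, so bi-quasiprimitivity makes it transitive on each half. Since `G_(Δ₀)` is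
trivial on `Δ₀`, already `G_(Δ₁)` is transitive on `Δ₀`, and likewise `G_(Δ₀)` on `Δ₁`. Moving
the two ends of one edge by these kernels, each fixing the other end, joins every vertex of `Δ₀`
to every vertex of `Δ₁`; the halves have equal size because the transitive group `G` swaps them.
-/

open SimpleGraph

namespace ATB

variable {V : Type*}

/-- `σ` is an automorphism of the graph `Γ`. -/
def IsAut (Γ : SimpleGraph V) (σ : Equiv.Perm V) : Prop :=
  ∀ u v : V, Γ.Adj (σ u) (σ v) ↔ Γ.Adj u v

/-- The full automorphism group of `Γ`, as a subgroup of `Equiv.Perm V`. -/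
def autGroup (Γ : SimpleGraph V) : Subgroup (Equiv.Perm V) where
  carrier := {σ | IsAut Γ σ}
  one_mem' := by intro u v; simp
  mul_mem' := by
    intro a b ha hb u v
    rw [show ((a * b) u) = a (b u) from rfl, show ((a * b) v) = a (b v) from rfl,
      ha (b u) (b v), hb u v]
  inv_mem' := by
    intro a ha u v
    have h := ha (a⁻¹ u) (a⁻¹ v)
    rw [show a (a⁻¹ u) = u from Equiv.apply_symm_apply a u,
      show a (a⁻¹ v) = v from Equiv.apply_symm_apply a v] at h
    exact h.symm

/-- `G` is transitive on the vertices. -/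
def VertexTrans (G : Subgroup (Equiv.Perm V)) : Prop := ∀ u v : V, ∃ σ ∈ G, σ u = v

/-- `G` is transitive on the arcs (ordered pairs of adjacent vertices) of `Γ`. -/
def ArcTrans (Γ : SimpleGraph V) (G : Subgroup (Equiv.Perm V)) : Prop :=
  ∀ u v u' v' : V, Γ.Adj u v → Γ.Adj u' v' → ∃ σ ∈ G, σ u = u' ∧ σ v = v'

/-- `Γ` is arc-transitive (with respect to its full automorphism group). -/
def IsArcTransitive (Γ : SimpleGraph V) : Prop := ArcTrans Γ (autGroup Γ)

/-- A circulant graph: there is an automorphism of order `|V|` acting transitively,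
i.e. a cyclic subgroup of the automorphism group acting regularly on the vertices. -/
def IsCirculant (Γ : SimpleGraph V) : Prop :=
  ∃ σ : Equiv.Perm V, IsAut Γ σ ∧ orderOf σ = Nat.card V ∧
    ∀ v w : V, ∃ k : ℕ, (σ ^ k) v = w

/-- A bicirculant graph on `2n` vertices: an automorphism of order `n` with exactly two
orbits (necessarily both of length `n`). -/
def IsBicirculant (Γ : SimpleGraph V) : Prop :=
  ∃ σ : Equiv.Perm V, IsAut Γ σ ∧ 2 * orderOf σ = Nat.card V ∧
    ∃ v w : V, (∀ u : V, (∃ k : ℕ, (σ ^ k) v = u) ∨ (∃ k : ℕ, (σ ^ k) w = u)) ∧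
      ∀ k : ℕ, (σ ^ k) v ≠ w

/-- The orbit of `v` under a subgroup `H` of permutations. -/
def orb (H : Subgroup (Equiv.Perm V)) (v : V) : Set V := {w | ∃ σ ∈ H, σ v = w}

/-- `H` acts semiregularly: only the identity fixes a point. -/
def Semiregular (H : Subgroup (Equiv.Perm V)) : Prop :=
  ∀ σ ∈ H, σ ≠ 1 → ∀ v : V, σ v ≠ v

/-- `H` acts regularly on the vertices. -/
def RegularOn (H : Subgroup (Equiv.Perm V)) : Prop := VertexTrans H ∧ Semiregular H

/-- `H` has exactly two orbits, namely those of `v` and `w`. -/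
def TwoOrbits (H : Subgroup (Equiv.Perm V)) (v w : V) : Prop :=
  w ∉ orb H v ∧ ∀ u : V, u ∈ orb H v ∨ u ∈ orb H w

/-- `N` is a normal subgroup of `G`. -/
def NormalIn (N G : Subgroup (Equiv.Perm V)) : Prop :=
  N ≤ G ∧ ∀ g ∈ G, ∀ x ∈ N, g * x * g⁻¹ ∈ N

/-- `N` has at most `k` orbits. -/
def AtMostOrbits (N : Subgroup (Equiv.Perm V)) (k : ℕ) : Prop :=
  ∃ f : Fin k → V, ∀ v : V, ∃ i, v ∈ orb N (f i)

/-- `N` has at least three orbits. -/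
def AtLeastThreeOrbits (N : Subgroup (Equiv.Perm V)) : Prop :=
  ∃ a b c : V, b ∉ orb N a ∧ c ∉ orb N a ∧ c ∉ orb N b

/-- `G` is quasiprimitive: transitive, and every nontrivial normal subgroup is transitive. -/
def Quasiprimitive (G : Subgroup (Equiv.Perm V)) : Prop :=
  VertexTrans G ∧ ∀ N : Subgroup (Equiv.Perm V), NormalIn N G → N ≠ ⊥ → VertexTrans N

/-- `G` is bi-quasiprimitive: transitive, every nontrivial normal subgroup has at most
two orbits, and some nontrivial normal subgroup has exactly two orbits. -/
def BiQuasiprimitive (G : Subgroup (Equiv.Perm V)) : Prop :=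
  VertexTrans G ∧
    (∀ N : Subgroup (Equiv.Perm V), NormalIn N G → N ≠ ⊥ → AtMostOrbits N 2) ∧
    ∃ N : Subgroup (Equiv.Perm V), NormalIn N G ∧ N ≠ ⊥ ∧ ∃ v w : V, TwoOrbits N v w

/-- `B` is a block for the action of `G`. -/
def IsBlockFor (G : Subgroup (Equiv.Perm V)) (B : Set V) : Prop :=
  ∀ σ ∈ G, ⇑σ '' B = B ∨ Disjoint (⇑σ '' B) B

/-- `G` is primitive: transitive and every block is trivial. -/
def Primitive (G : Subgroup (Equiv.Perm V)) : Prop :=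
  VertexTrans G ∧ ∀ B : Set V, IsBlockFor G B → B.Subsingleton ∨ B = Set.univ

/-- `G` is 2-transitive on the vertices. -/
def TwoTrans (G : Subgroup (Equiv.Perm V)) : Prop :=
  ∀ u v u' v' : V, u ≠ v → u' ≠ v' → ∃ σ ∈ G, σ u = u' ∧ σ v = v'

/-- `G` is 2-transitive on the subset `Δ`. -/
def TwoTransOn (G : Subgroup (Equiv.Perm V)) (Δ : Set V) : Prop :=
  ∀ u ∈ Δ, ∀ v ∈ Δ, ∀ u' ∈ Δ, ∀ v' ∈ Δ, u ≠ v → u' ≠ v' →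
    ∃ σ ∈ G, σ u = u' ∧ σ v = v'

/-- `G` is transitive on the subset `Δ`. -/
def TransOn (G : Subgroup (Equiv.Perm V)) (Δ : Set V) : Prop :=
  ∀ u ∈ Δ, ∀ v ∈ Δ, ∃ σ ∈ G, σ u = v

/-- `G` acts faithfully on the subset `Δ`. -/
def FaithfulOn (G : Subgroup (Equiv.Perm V)) (Δ : Set V) : Prop :=
  ∀ σ ∈ G, (∀ v ∈ Δ, σ v = v) → σ = 1

/-- `Δ₀, Δ₁` form a bipartition of the graph `Γ`. -/
structure IsBipartition (Γ : SimpleGraph V) (Δ₀ Δ₁ : Set V) : Prop where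
  covers : Δ₀ ∪ Δ₁ = Set.univ
  disj : Disjoint Δ₀ Δ₁
  not_adj₀ : ∀ u ∈ Δ₀, ∀ v ∈ Δ₀, ¬Γ.Adj u v
  not_adj₁ : ∀ u ∈ Δ₁, ∀ v ∈ Δ₁, ¬Γ.Adj u v

/-- The setwise stabilizer of `Δ` in `G`. -/
def setStab (G : Subgroup (Equiv.Perm V)) (Δ : Set V) : Subgroup (Equiv.Perm V) where
  carrier := {σ | σ ∈ G ∧ ⇑σ '' Δ = Δ}
  one_mem' := ⟨G.one_mem, by simp⟩
  mul_mem' := by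
    rintro a b ⟨haG, haΔ⟩ ⟨hbG, hbΔ⟩
    refine ⟨G.mul_mem haG hbG, ?_⟩
    rw [show ⇑(a * b) = ⇑a ∘ ⇑b from rfl, Set.image_comp, hbΔ, haΔ]
  inv_mem' := by
    rintro a ⟨haG, haΔ⟩
    refine ⟨G.inv_mem haG, ?_⟩
    conv_lhs => rw [← haΔ]
    rw [show ⇑a⁻¹ = ⇑a.symm from rfl]
    exact Equiv.symm_image_image a Δ

/-- The subgroup of `G` stabilizing both `Δ₀` and `Δ₁` setwise (`G⁺`). -/
def plusStab (G : Subgroup (Equiv.Perm V)) (Δ₀ Δ₁ : Set V) : Subgroup (Equiv.Perm V) :=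
  setStab (setStab G Δ₀) Δ₁

/-- The stabilizer of the point `v` in `G`. -/
def stabPt (G : Subgroup (Equiv.Perm V)) (v : V) : Subgroup (Equiv.Perm V) :=
  setStab G {v}

/-- A transitive group `G` has rank `k`: every point stabilizer has exactly `k` orbits. -/
def HasRank (G : Subgroup (Equiv.Perm V)) (k : ℕ) : Prop :=
  ∀ v : V, ∃ f : Fin k → V,
    (∀ i j : Fin k, i ≠ j → f j ∉ orb (stabPt G v) (f i)) ∧
    ∀ u : V, ∃ i : Fin k, u ∈ orb (stabPt G v) (f i)

/-- `G` is of affine type over `GF(2)`: it has a regular normal subgroup of exponent 2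
(an elementary abelian 2-group); equivalently `G` embeds in `AGL(m,2)` in its natural action. -/
def AffineTypeTwo (G : Subgroup (Equiv.Perm V)) : Prop :=
  ∃ N : Subgroup (Equiv.Perm V), NormalIn N G ∧ RegularOn N ∧ ∀ σ ∈ N, σ * σ = 1

/-- `P` is a `G`-invariant partition of the vertex set. -/
structure IsInvPartition (G : Subgroup (Equiv.Perm V)) (P : Set (Set V)) : Prop where
  nonempty : ∀ B ∈ P, B.Nonempty
  covers : ∀ v : V, ∃ B ∈ P, v ∈ B
  disj : ∀ B ∈ P, ∀ C ∈ P, B ≠ C → Disjoint B C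
  inv : ∀ σ ∈ G, ∀ B ∈ P, ⇑σ '' B ∈ P

/-- `Q` is a block for the induced action of `G` on the partition `P`. -/
def PartBlock (G : Subgroup (Equiv.Perm V)) (P Q : Set (Set V)) : Prop :=
  Q ⊆ P ∧ ∀ σ ∈ G,
    (fun B => ⇑σ '' B) '' Q = Q ∨ Disjoint ((fun B => ⇑σ '' B) '' Q) Q

/-- `G` is transitive on the parts of `P`. -/
def TransOnParts (G : Subgroup (Equiv.Perm V)) (P : Set (Set V)) : Prop :=
  ∀ B ∈ P, ∀ C ∈ P, ∃ σ ∈ G, ⇑σ '' B = C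

/-- The induced action of `G` on the partition `P` is primitive. -/
def PrimitiveOnParts (G : Subgroup (Equiv.Perm V)) (P : Set (Set V)) : Prop :=
  TransOnParts G P ∧ ∀ Q : Set (Set V), PartBlock G P Q → Q.Subsingleton ∨ Q = P

/-- `G` acts faithfully on the partition `P`. -/
def FaithfulOnParts (G : Subgroup (Equiv.Perm V)) (P : Set (Set V)) : Prop :=
  ∀ σ ∈ G, (∀ B ∈ P, ⇑σ '' B = B) → σ = 1

/-- The induced action of `G` on the partition `P` is 2-transitive. -/
def TwoTransOnParts (G : Subgroup (Equiv.Perm V)) (P : Set (Set V)) : Prop :=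
  ∀ B ∈ P, ∀ C ∈ P, ∀ B' ∈ P, ∀ C' ∈ P, B ≠ C → B' ≠ C' →
    ∃ σ ∈ G, ⇑σ '' B = B' ∧ ⇑σ '' C = C'

/-- `H` has exactly two orbits of equal size on the subset `Δ`. -/
def TwoEqualOrbitsOn (H : Subgroup (Equiv.Perm V)) (Δ : Set V) : Prop :=
  ∃ a ∈ Δ, ∃ b ∈ Δ, orb H a ∪ orb H b = Δ ∧ Disjoint (orb H a) (orb H b) ∧
    (orb H a).ncard = (orb H b).ncard

/-- `G` is almost simple: it has a nonabelian simple normal subgroup with trivial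
centralizer, i.e. `S ≤ G ≤ Aut(S)` for a nonabelian simple group `S`. -/
def AlmostSimple (G : Subgroup (Equiv.Perm V)) : Prop :=
  ∃ S : Subgroup (Equiv.Perm V), S ≤ G ∧ (∀ g ∈ G, ∀ s ∈ S, g * s * g⁻¹ ∈ S) ∧
    IsSimpleGroup ↥S ∧ (∃ a ∈ S, ∃ b ∈ S, a * b ≠ b * a) ∧
    ∀ g ∈ G, (∀ s ∈ S, g * s = s * g) → g = 1

/-- The setoid on `V` whose classes are the orbits of `N`. -/
def orbSetoid (N : Subgroup (Equiv.Perm V)) : Setoid V where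
  r u v := ∃ σ ∈ N, σ u = v
  iseqv := by
    refine ⟨fun u => ⟨1, N.one_mem, rfl⟩, ?_, ?_⟩
    · rintro u v ⟨σ, hσ, rfl⟩
      exact ⟨σ⁻¹, N.inv_mem hσ, Equiv.symm_apply_apply σ u⟩
    · rintro u v w ⟨σ, hσ, rfl⟩ ⟨τ, hτ, rfl⟩
      exact ⟨τ * σ, N.mul_mem hτ hσ, rfl⟩

/-- The set of orbits of `N` on `V`. -/
abbrev orbQuot (N : Subgroup (Equiv.Perm V)) : Type _ := Quotient (orbSetoid N)

/-- The orbit of `v`, as a vertex of the quotient. -/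
def cls (N : Subgroup (Equiv.Perm V)) (v : V) : orbQuot N := Quotient.mk (orbSetoid N) v

/-- The quotient graph of `Γ` by a partition given as a setoid: parts are adjacent
iff some vertex of one is adjacent to some vertex of the other. -/
def setoidQuot (Γ : SimpleGraph V) (s : Setoid V) : SimpleGraph (Quotient s) where
  Adj A B := A ≠ B ∧ ∃ u v : V, Γ.Adj u v ∧ Quotient.mk s u = A ∧ Quotient.mk s v = B
  symm := by
    refine ⟨?_⟩
    rintro A B ⟨hne, u, v, h, hu, hv⟩
    exact ⟨hne.symm, v, u, h.symm, hv, hu⟩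
  loopless := by
    refine ⟨?_⟩
    rintro A ⟨hne, -⟩
    exact hne rfl

/-- The quotient graph `Γ_N` of `Γ` by the orbits of `N`. -/
def quotGraph (Γ : SimpleGraph V) (N : Subgroup (Equiv.Perm V)) : SimpleGraph (orbQuot N) :=
  setoidQuot Γ (orbSetoid N)

/-- `Γ` is an `r`-cover of the quotient graph `Γ_N`: for every edge `{B,C}` of `Γ_N`
and every `v ∈ B`, `v` has exactly `r` neighbours in `C`. -/
def IsRCover (Γ : SimpleGraph V) (N : Subgroup (Equiv.Perm V)) (r : ℕ) : Prop :=
  ∀ (v : V) (C : orbQuot N), (quotGraph Γ N).Adj (cls N v) C →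
    {u : V | Γ.Adj v u ∧ cls N u = C}.ncard = r

/-! ## The particular graphs -/

/-- The complete multipartite graph with `m` parts of size `b`. -/
def completeMultipartite (m b : ℕ) : SimpleGraph (Fin m × Fin b) :=
  SimpleGraph.fromRel fun u v => u.1 ≠ v.1

/-- `K_{n,n}` minus a perfect matching. -/
def knnMinus (n : ℕ) : SimpleGraph (Fin n ⊕ Fin n) :=
  SimpleGraph.fromRel fun u v => ∃ i j : Fin n, i ≠ j ∧ u = Sum.inl i ∧ v = Sum.inr j

/-- The graph `G(2p,r)`: bipartite on two copies of `Z_p`, with `x ~ y'` iff `y - x`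
lies in the unique subgroup of order `r` of the multiplicative group (the solutions
of `z^r = 1`). -/
def graphG (p r : ℕ) : SimpleGraph (ZMod p ⊕ ZMod p) :=
  SimpleGraph.fromRel fun u v =>
    ∃ x y : ZMod p, u = Sum.inl x ∧ v = Sum.inr y ∧ (y - x) ^ r = 1

/-- The circulant `Cay(p,e) = Cay(Z_p, S)` where `S` is the unique subgroup of order `e`
of the multiplicative group of `Z_p` (the solutions of `z^e = 1`). -/
def cayCirc (p e : ℕ) : SimpleGraph (ZMod p) :=
  SimpleGraph.fromRel fun x y => (y - x) ^ e = 1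

/-- The points (1-dimensional subspaces) of the projective space `PG(d-1,F)`. -/
def projPoint (F : Type*) [Field F] (d : ℕ) : Type _ :=
  {W : Submodule F (Fin d → F) // Module.finrank F W = 1}

/-- The hyperplanes (`(d-1)`-dimensional subspaces) of the projective space `PG(d-1,F)`. -/
def projHyp (F : Type*) [Field F] (d : ℕ) : Type _ :=
  {W : Submodule F (Fin d → F) // Module.finrank F W = d - 1}

/-- The point-hyperplane incidence graph `B(PG(d-1,q))`. -/
def BPG (F : Type*) [Field F] (d : ℕ) : SimpleGraph (projPoint F d ⊕ projHyp F d) :=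
  SimpleGraph.fromRel fun u v => ∃ (A : projPoint F d) (B : projHyp F d),
    u = Sum.inl A ∧ v = Sum.inr B ∧ A.1 ≤ B.1

/-- The point-hyperplane non-incidence graph `B'(PG(d-1,q))`. -/
def BPG' (F : Type*) [Field F] (d : ℕ) : SimpleGraph (projPoint F d ⊕ projHyp F d) :=
  SimpleGraph.fromRel fun u v => ∃ (A : projPoint F d) (B : projHyp F d),
    u = Sum.inl A ∧ v = Sum.inr B ∧ A.1 ⊓ B.1 = ⊥

/-- The nonzero quadratic residues modulo 11. -/
def quadRes11 : Set (ZMod 11) := {1, 3, 4, 5, 9}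

/-- The graph `B'(H(11))`: vertices are `Z_11` (left part) together with the translates
`R + i` of the residues `R` (right part, indexed by `i`), with `x` adjacent to `R + i`
iff `x ∉ R + i`. -/
def BH11' : SimpleGraph (ZMod 11 ⊕ ZMod 11) :=
  SimpleGraph.fromRel fun u v =>
    ∃ x i : ZMod 11, u = Sum.inl x ∧ v = Sum.inr i ∧ x - i ∉ quadRes11

/-- The Hamming graph `H(2,4)`. -/
def hamming24 : SimpleGraph (Fin 4 × Fin 4) :=
  SimpleGraph.fromRel fun u v => (u.1 = v.1 ∧ u.2 ≠ v.2) ∨ (u.1 ≠ v.1 ∧ u.2 = v.2)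

/-- The Petersen graph: the Kneser graph on 2-subsets of a 5-set. -/
def petersen : SimpleGraph {s : Finset (Fin 5) // s.card = 2} :=
  SimpleGraph.fromRel fun u v => Disjoint u.1 v.1

/-- The 5-dimensional hypercube graph. -/
def cube5 : SimpleGraph (Fin 5 → ZMod 2) :=
  SimpleGraph.fromRel fun x y => ∃! i : Fin 5, x i ≠ y i

/-- The antipodal pairing on the 5-cube. -/
def antipodal5 : Setoid (Fin 5 → ZMod 2) where
  r x y := y = x ∨ y = x + 1
  iseqv := by
    have key : ∀ x : Fin 5 → ZMod 2, x + 1 + 1 = x := by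
      intro x
      funext i
      show x i + 1 + 1 = x i
      have h : (1 + 1 : ZMod 2) = 0 := by decide
      rw [add_assoc, h, add_zero]
    refine ⟨fun x => Or.inl rfl, ?_, ?_⟩
    · rintro x y (rfl | rfl)
      · exact Or.inl rfl
      · exact Or.inr (key x).symm
    · rintro x y z (rfl | rfl) h2
      · exact h2
      · rcases h2 with rfl | rfl
        · exact Or.inr rfl
        · exact Or.inl (key x)

/-- The folded 5-cube: the quotient of the 5-cube by the antipodal pairing. -/
def foldedCube5 : SimpleGraph (Quotient antipodal5) := setoidQuot cube5 antipodal5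

/-- The Clebsch graph: the complement of the folded 5-cube. -/
def clebsch : SimpleGraph (Quotient antipodal5) := foldedCube5ᶜ

/-- The standard double cover of `Γ`. -/
def doubleCover (Γ : SimpleGraph V) : SimpleGraph (V × Bool) :=
  SimpleGraph.fromRel fun u v => Γ.Adj u.1 v.1 ∧ u.2 = true ∧ v.2 = false

/-- The swap `(x,i) ↦ (x, 3-i)` of the two levels of the standard double cover. -/
def swapPerm (V : Type*) : Equiv.Perm (V × Bool) :=
  Equiv.prodCongr (Equiv.refl V) ⟨Bool.not, Bool.not, Bool.not_not, Bool.not_not⟩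

/-- The Cayley graph of a group with connection set `S` (edges `{g, s*g}`). -/
def cayleyGraph {T : Type*} [Group T] (S : Set T) : SimpleGraph T :=
  SimpleGraph.fromRel fun g h => ∃ s ∈ S, h = s * g

/-! ## `PGL` and `PΓL` acting on projective points -/

/-- `g` is a `τ`-semilinear bijection. -/
def IsSemilinearBij (F : Type*) [Field F] (d : ℕ) (τ : F ≃+* F)
    (g : (Fin d → F) ≃ (Fin d → F)) : Prop :=
  (∀ x y : Fin d → F, g (x + y) = g x + g y) ∧
  ∀ (c : F) (x : Fin d → F), g (c • x) = τ c • g x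

/-- `g` is a linear bijection. -/
def IsLinearBij (F : Type*) [Field F] (d : ℕ) (g : (Fin d → F) ≃ (Fin d → F)) : Prop :=
  (∀ x y : Fin d → F, g (x + y) = g x + g y) ∧
  ∀ (c : F) (x : Fin d → F), g (c • x) = c • g x

/-- The permutation `π` of the projective points is induced by the bijection `g`. -/
def inducesProjMap (F : Type*) [Field F] (d : ℕ) (g : (Fin d → F) ≃ (Fin d → F))
    (π : Equiv.Perm (projPoint F d)) : Prop :=
  ∀ W : projPoint F d, ((π W).1 : Set (Fin d → F)) = ⇑g '' ((W.1 : Submodule F (Fin d → F)) : Set (Fin d → F))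

/-- `PΓL(d,F)` as a permutation group on the projective points: the permutations induced
by semilinear bijections. -/
def PGammaL (F : Type*) [Field F] (d : ℕ) : Subgroup (Equiv.Perm (projPoint F d)) where
  carrier := {π | ∃ (τ : F ≃+* F) (g : (Fin d → F) ≃ (Fin d → F)),
    IsSemilinearBij F d τ g ∧ inducesProjMap F d g π}
  one_mem' := ⟨RingEquiv.refl F, Equiv.refl _, ⟨fun _ _ => rfl, fun _ _ => rfl⟩,
    fun W => by simp [inducesProjMap]⟩
  mul_mem' := by
    rintro a b ⟨τa, ga, ⟨haAdd, haSmul⟩, hIa⟩ ⟨τb, gb, ⟨hbAdd, hbSmul⟩, hIb⟩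
    refine ⟨τb.trans τa, gb.trans ga, ⟨?_, ?_⟩, ?_⟩
    · intro x y
      simp only [Equiv.trans_apply, hbAdd, haAdd]
    · intro c x
      simp only [Equiv.trans_apply, hbSmul, haSmul, RingEquiv.trans_apply]
    · intro W
      have h2 := hIa (b W)
      have h := hIb W
      rw [show ((a * b) W) = a (b W) from rfl, h2, h,
        show ⇑(gb.trans ga) = ⇑ga ∘ ⇑gb from rfl, Set.image_comp]
  inv_mem' := by
    rintro a ⟨τ, g, ⟨hAdd, hSmul⟩, hI⟩
    refine ⟨τ.symm, g.symm, ⟨?_, ?_⟩, ?_⟩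
    · intro x y
      apply g.injective
      rw [hAdd, Equiv.apply_symm_apply, Equiv.apply_symm_apply, Equiv.apply_symm_apply]
    · intro c x
      apply g.injective
      rw [hSmul, Equiv.apply_symm_apply, Equiv.apply_symm_apply,
        RingEquiv.apply_symm_apply]
    · intro W
      have h := hI (a⁻¹ W)
      rw [show a (a⁻¹ W) = W from Equiv.apply_symm_apply a W] at h
      rw [h, Equiv.symm_image_image]

/-- `PGL(d,F)` as a permutation group on the projective points: the permutations induced
by linear bijections. -/
def PGLsub (F : Type*) [Field F] (d : ℕ) : Subgroup (Equiv.Perm (projPoint F d)) where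
  carrier := {π | ∃ g : (Fin d → F) ≃ (Fin d → F), IsLinearBij F d g ∧ inducesProjMap F d g π}
  one_mem' := ⟨Equiv.refl _, ⟨fun _ _ => rfl, fun _ _ => rfl⟩, fun W => by simp [inducesProjMap]⟩
  mul_mem' := by
    rintro a b ⟨ga, ⟨haAdd, haSmul⟩, hIa⟩ ⟨gb, ⟨hbAdd, hbSmul⟩, hIb⟩
    refine ⟨gb.trans ga, ⟨?_, ?_⟩, ?_⟩
    · intro x y
      simp only [Equiv.trans_apply, hbAdd, haAdd]
    · intro c x
      simp only [Equiv.trans_apply, hbSmul, haSmul]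
    · intro W
      have h2 := hIa (b W)
      have h := hIb W
      rw [show ((a * b) W) = a (b W) from rfl, h2, h,
        show ⇑(gb.trans ga) = ⇑ga ∘ ⇑gb from rfl, Set.image_comp]
  inv_mem' := by
    rintro a ⟨g, ⟨hAdd, hSmul⟩, hI⟩
    refine ⟨g.symm, ⟨?_, ?_⟩, ?_⟩
    · intro x y
      apply g.injective
      rw [hAdd, Equiv.apply_symm_apply, Equiv.apply_symm_apply, Equiv.apply_symm_apply]
    · intro c x
      apply g.injective
      rw [hSmul, Equiv.apply_symm_apply, Equiv.apply_symm_apply]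
    · intro W
      have h := hI (a⁻¹ W)
      rw [show a (a⁻¹ W) = W from Equiv.apply_symm_apply a W] at h
      rw [h, Equiv.symm_image_image]

/-- The graphs appearing in the main theorem (Theorem 1.1 (a)-(g)). -/
def IsBasicGraph {W : Type*} (Δ : SimpleGraph W) : Prop :=
  (∃ n : ℕ, 2 ≤ n ∧ Nonempty (Δ ≃g completeBipartiteGraph (Fin n) (Fin n))) ∨
  (∃ n : ℕ, 3 ≤ n ∧ Nonempty (Δ ≃g (⊤ : SimpleGraph (Fin n)))) ∨
  (∃ n : ℕ, 3 ≤ n ∧ Nonempty (Δ ≃g completeMultipartite n 2)) ∨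
  (∃ n : ℕ, 3 ≤ n ∧ Nonempty (Δ ≃g knnMinus n)) ∨
  (∃ p e : ℕ, p.Prime ∧ 1 < e ∧ e ∣ p - 1 ∧ Nonempty (Δ ≃g graphG p e)) ∨
  (∃ (F : Type) (iF : Field F) (_ : Finite F) (d : ℕ), 3 ≤ d ∧
    (Nonempty (Δ ≃g @BPG F iF d) ∨ Nonempty (Δ ≃g @BPG' F iF d))) ∨
  (∃ p e : ℕ, p.Prime ∧ 2 ∣ e ∧ e ∣ p - 1 ∧ Nonempty (Δ ≃g cayCirc p e)) ∨
  Nonempty (Δ ≃g BH11') ∨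
  (Nonempty (Δ ≃g petersen) ∨ Nonempty (Δ ≃g petersenᶜ)) ∨
  (Nonempty (Δ ≃g hamming24) ∨ Nonempty (Δ ≃g hamming24ᶜ)) ∨
  (Nonempty (Δ ≃g clebsch) ∨ Nonempty (Δ ≃g clebschᶜ))


open scoped Pointwise

open MulAction

namespace IsBipartition

variable {Γ : SimpleGraph V} {Δ₀ Δ₁ : Set V}

theorem symm (h : IsBipartition Γ Δ₀ Δ₁) : IsBipartition Γ Δ₁ Δ₀ :=
  ⟨Set.union_comm Δ₀ Δ₁ ▸ h.covers, h.disj.symm, h.not_adj₁, h.not_adj₀⟩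

theorem right_eq_compl (h : IsBipartition Γ Δ₀ Δ₁) : Δ₁ = Δ₀ᶜ :=
  (isCompl_iff.2 ⟨h.disj, codisjoint_iff.2 h.covers⟩).compl_eq.symm

theorem mem_left_iff_mem_right_of_adj (h : IsBipartition Γ Δ₀ Δ₁) {a b : V} (hab : Γ.Adj a b) :
    a ∈ Δ₀ ↔ b ∈ Δ₁ := by
  refine ⟨fun ha => ?_, fun hb => ?_⟩
  · rw [h.right_eq_compl]
    exact fun hb => h.not_adj₀ a ha b hb hab
  · rw [h.symm.right_eq_compl]
    exact fun ha => h.not_adj₁ a ha b hb hab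

theorem mem_left_iff_of_walk (h : IsBipartition Γ Δ₀ Δ₁) {u w : V} (p : Γ.Walk u w) :
    u ∈ Δ₀ ↔ (w ∈ Δ₀ ↔ Even p.length) := by
  induction p with
  | nil => simp
  | cons hadj q ih =>
    rw [Walk.length_cons, Nat.even_add_one, h.mem_left_iff_mem_right_of_adj hadj,
      h.right_eq_compl, Set.mem_compl_iff]
    tauto

theorem eq_or_eq_swap (hconn : Γ.Connected) (h : IsBipartition Γ Δ₀ Δ₁) {A B : Set V}
    (h' : IsBipartition Γ A B) : (A = Δ₀ ∧ B = Δ₁) ∨ (A = Δ₁ ∧ B = Δ₀) := by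
  obtain ⟨v⟩ := hconn.nonempty
  have key : ∀ u, (u ∈ A ↔ u ∈ Δ₀) ↔ (v ∈ A ↔ v ∈ Δ₀) := fun u => by
    obtain ⟨p⟩ := hconn.preconnected u v
    have := h.mem_left_iff_of_walk p
    have := h'.mem_left_iff_of_walk p
    tauto
  rw [h'.right_eq_compl, h.right_eq_compl]
  by_cases hv : v ∈ A ↔ v ∈ Δ₀
  · have hA : A = Δ₀ := Set.ext fun u => (key u).2 hv
    exact Or.inl ⟨hA, hA ▸ rfl⟩
  · have hA : A = Δ₀ᶜ := Set.ext fun u => by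
      rw [Set.mem_compl_iff]
      have := key u
      tauto
    exact Or.inr ⟨hA, hA ▸ compl_compl Δ₀⟩

theorem image (h : IsBipartition Γ Δ₀ Δ₁) {σ : Equiv.Perm V} (hσ : IsAut Γ σ) :
    IsBipartition Γ (σ '' Δ₀) (σ '' Δ₁) where
  covers := by rw [← Set.image_union, h.covers, Set.image_univ, Equiv.range_eq_univ]
  disj := (Set.disjoint_image_iff σ.injective).2 h.disj
  not_adj₀ := by
    rintro _ ⟨a, ha, rfl⟩ _ ⟨b, hb, rfl⟩ hab
    exact h.not_adj₀ a ha b hb ((hσ a b).1 hab)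
  not_adj₁ := by
    rintro _ ⟨a, ha, rfl⟩ _ ⟨b, hb, rfl⟩ hab
    exact h.not_adj₁ a ha b hb ((hσ a b).1 hab)

theorem image_eq_or_swap (hconn : Γ.Connected) (h : IsBipartition Γ Δ₀ Δ₁) {σ : Equiv.Perm V}
    (hσ : IsAut Γ σ) :
    (σ '' Δ₀ = Δ₀ ∧ σ '' Δ₁ = Δ₁) ∨ (σ '' Δ₀ = Δ₁ ∧ σ '' Δ₁ = Δ₀) :=
  h.eq_or_eq_swap hconn (h.image hσ)

theorem stabilizer_right (h : IsBipartition Γ Δ₀ Δ₁) :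
    stabilizer (Equiv.Perm V) Δ₁ = stabilizer (Equiv.Perm V) Δ₀ := by
  rw [h.right_eq_compl, stabilizer_compl]

theorem nonempty_iso_completeBipartiteGraph (h : IsBipartition Γ Δ₀ Δ₁)
    (hadj : ∀ x ∈ Δ₀, ∀ y ∈ Δ₁, Γ.Adj x y) : Nonempty (Γ ≃g completeBipartiteGraph Δ₀ Δ₁) := by
  classical
  obtain rfl := h.right_eq_compl
  refine ⟨⟨(Equiv.Set.sumCompl Δ₀).symm, fun {u v} => ?_⟩⟩
  by_cases hu : u ∈ Δ₀ <;> by_cases hv : v ∈ Δ₀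
  · simp [Equiv.Set.sumCompl_symm_apply_of_mem, hu, hv, h.not_adj₀ u hu v hv]
  · simp [Equiv.Set.sumCompl_symm_apply_of_mem, Equiv.Set.sumCompl_symm_apply_of_notMem, hu, hv,
      hadj u hu v hv]
  · simp [Equiv.Set.sumCompl_symm_apply_of_mem, Equiv.Set.sumCompl_symm_apply_of_notMem, hu, hv,
      (hadj v hv u hu).symm]
  · simp [Equiv.Set.sumCompl_symm_apply_of_notMem, hu, hv, h.not_adj₁ u hu v hv]

end IsBipartition

section Orbits

variable {H : Subgroup (Equiv.Perm V)} {a b : V}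

theorem mem_orb_self (H : Subgroup (Equiv.Perm V)) (a : V) : a ∈ orb H a :=
  (orbSetoid H).refl a

theorem orb_eq_of_mem (h : b ∈ orb H a) : orb H b = orb H a :=
  Set.ext fun _ =>
    ⟨(orbSetoid H).iseqv.trans h, (orbSetoid H).iseqv.trans ((orbSetoid H).iseqv.symm h)⟩

theorem orb_subset_of_le_stabilizer {O : Set V} (hH : H ≤ stabilizer (Equiv.Perm V) O)
    (ha : a ∈ O) : orb H a ⊆ O := by
  rintro _ ⟨σ, hσ, rfl⟩
  exact (mem_stabilizer_set.1 (hH hσ) a).2 ha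

theorem le_stabilizer_orb (H : Subgroup (Equiv.Perm V)) (a : V) :
    H ≤ stabilizer (Equiv.Perm V) (orb H a) := fun σ hσ =>
  mem_stabilizer_set.2 fun b =>
    ⟨fun hb => orb_eq_of_mem hb ▸ ⟨σ⁻¹, H.inv_mem hσ, σ.symm_apply_apply b⟩,
      fun hb => (orb_eq_of_mem hb) ▸ ⟨σ, hσ, rfl⟩⟩

theorem orb_sup_subset {A : Subgroup (Equiv.Perm V)}
    (hA : A ≤ fixingSubgroup (Equiv.Perm V) (orb H a)) : orb (A ⊔ H) a ⊆ orb H a :=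
  orb_subset_of_le_stabilizer
    (sup_le (hA.trans (fixingSubgroup_le_stabilizer _ _)) (le_stabilizer_orb H a))
    (mem_orb_self H a)

theorem AtMostOrbits.mem_orb_or_mem_orb (h : AtMostOrbits H 2) (hab : b ∉ orb H a) (u : V) :
    u ∈ orb H a ∨ u ∈ orb H b := by
  obtain ⟨f, hf⟩ := h
  obtain ⟨i, hi⟩ := hf a
  obtain ⟨j, hj⟩ := hf b
  obtain ⟨k, hk⟩ := hf u
  have hij : i ≠ j := by
    rintro rfl
    exact hab (orb_eq_of_mem hi ▸ hj)
  have hfin : ∀ i j k : Fin 2, i ≠ j → k = i ∨ k = j := by decide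
  rcases hfin i j k hij with rfl | rfl
  · exact Or.inl (orb_eq_of_mem hi ▸ hk)
  · exact Or.inr (orb_eq_of_mem hj ▸ hk)

end Orbits

section Kernel

variable {G : Subgroup (Equiv.Perm V)} {Γ : SimpleGraph V} {Δ Δ₀ Δ₁ : Set V} {a b : V}

/-- The kernel `G_(Δ)` of the action of `G` on `Δ`. -/
def kerOn (G : Subgroup (Equiv.Perm V)) (Δ : Set V) : Subgroup (Equiv.Perm V) :=
  G ⊓ fixingSubgroup (Equiv.Perm V) Δ

theorem mem_kerOn {σ : Equiv.Perm V} : σ ∈ kerOn G Δ ↔ σ ∈ G ∧ ∀ v ∈ Δ, σ v = v := by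
  simp only [kerOn, Subgroup.mem_inf, mem_fixingSubgroup_iff, Equiv.Perm.smul_def]

theorem conj_mem_kerOn_image {g x : Equiv.Perm V} (hg : g ∈ G) (hx : x ∈ kerOn G Δ) :
    g * x * g⁻¹ ∈ kerOn G (g '' Δ) := by
  obtain ⟨hxG, hxΔ⟩ := mem_kerOn.1 hx
  refine mem_kerOn.2 ⟨G.mul_mem (G.mul_mem hg hxG) (G.inv_mem hg), ?_⟩
  rintro _ ⟨v, hv, rfl⟩
  simp [Equiv.Perm.mul_apply, hxΔ v hv]

theorem normalIn_kerOn_sup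
    (hG : ∀ g ∈ G, (g '' Δ₀ = Δ₀ ∧ g '' Δ₁ = Δ₁) ∨ (g '' Δ₀ = Δ₁ ∧ g '' Δ₁ = Δ₀)) :
    NormalIn (kerOn G Δ₀ ⊔ kerOn G Δ₁) G := by
  refine ⟨sup_le inf_le_left inf_le_left, fun g hg => ?_⟩
  suffices kerOn G Δ₀ ⊔ kerOn G Δ₁ ≤ (kerOn G Δ₀ ⊔ kerOn G Δ₁).comap (MulAut.conj g).toMonoidHom
    from fun x hx => this hx
  have hK : ∀ Δ, g '' Δ = Δ₀ ∨ g '' Δ = Δ₁ →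
      kerOn G Δ ≤ (kerOn G Δ₀ ⊔ kerOn G Δ₁).comap (MulAut.conj g).toMonoidHom := by
    rintro Δ (h | h) x hx <;> have := conj_mem_kerOn_image hg hx <;> rw [h] at this
    exacts [le_sup_left (b := kerOn G Δ₁) this, le_sup_right (a := kerOn G Δ₀) this]
  rcases hG g hg with ⟨h₀, h₁⟩ | ⟨h₀, h₁⟩
  exacts [sup_le (hK Δ₀ (.inl h₀)) (hK Δ₁ (.inr h₁)), sup_le (hK Δ₀ (.inr h₀)) (hK Δ₁ (.inl h₁))]

theorem kerOn_sup_le_stabilizer (hbip : IsBipartition Γ Δ₀ Δ₁) :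
    kerOn G Δ₀ ⊔ kerOn G Δ₁ ≤ stabilizer (Equiv.Perm V) Δ₀ :=
  sup_le (inf_le_right.trans (fixingSubgroup_le_stabilizer _ _))
    (hbip.stabilizer_right ▸ inf_le_right.trans (fixingSubgroup_le_stabilizer _ _))

theorem subset_orb_of_atMostOrbits_two {N : Subgroup (Equiv.Perm V)}
    (hbip : IsBipartition Γ Δ₀ Δ₁) (hN : AtMostOrbits N 2)
    (hN₀ : N ≤ stabilizer (Equiv.Perm V) Δ₀) (ha : a ∈ Δ₀) (hb : b ∈ Δ₁) : Δ₀ ⊆ orb N a := by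
  have hN₁ : N ≤ stabilizer (Equiv.Perm V) Δ₁ := hbip.stabilizer_right ▸ hN₀
  have hab : b ∉ orb N a := fun hb' =>
    Set.disjoint_left.1 hbip.disj (orb_subset_of_le_stabilizer hN₀ ha hb') hb
  exact fun u hu => (hN.mem_orb_or_mem_orb hab u).resolve_right fun hu' =>
    Set.disjoint_left.1 hbip.disj hu (orb_subset_of_le_stabilizer hN₁ hb hu')

/-- Transitivity of `G_(Δ₀) G_(Δ₁)` on `Δ₀` comes from `G_(Δ₁)` alone, since `G_(Δ₀)` fixes
`Δ₀` pointwise. -/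
theorem subset_orb_kerOn (hbip : IsBipartition Γ Δ₀ Δ₁)
    (hN : AtMostOrbits (kerOn G Δ₀ ⊔ kerOn G Δ₁) 2) (ha : a ∈ Δ₀) (hb : b ∈ Δ₁) :
    Δ₀ ⊆ orb (kerOn G Δ₁) a := by
  have hN₀ := kerOn_sup_le_stabilizer (G := G) hbip
  have hK₁ : orb (kerOn G Δ₁) a ⊆ Δ₀ := orb_subset_of_le_stabilizer (le_sup_right.trans hN₀) ha
  exact (subset_orb_of_atMostOrbits_two hbip hN hN₀ ha hb).trans
    (orb_sup_subset (inf_le_right.trans (fixingSubgroup_antitone (Equiv.Perm V) V hK₁)))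

theorem adj_of_mem_orb_kerOn (hG : G ≤ autGroup Γ) {x : V} (hb : b ∈ Δ) (hab : Γ.Adj a b)
    (hx : x ∈ orb (kerOn G Δ) a) : Γ.Adj x b := by
  obtain ⟨σ, hσ, rfl⟩ := hx
  obtain ⟨hσG, hσΔ⟩ := mem_kerOn.1 hσ
  simpa [hσΔ b hb] using (hG hσG a b).2 hab

theorem adj_of_atMostOrbits_kerOn_sup (hG : G ≤ autGroup Γ) (hbip : IsBipartition Γ Δ₀ Δ₁)
    (hN : AtMostOrbits (kerOn G Δ₀ ⊔ kerOn G Δ₁) 2) (ha : a ∈ Δ₀) (hab : Γ.Adj a b)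
    {x y : V} (hx : x ∈ Δ₀) (hy : y ∈ Δ₁) : Γ.Adj x y := by
  have hb : b ∈ Δ₁ := (hbip.mem_left_iff_mem_right_of_adj hab).1 ha
  have hxb := adj_of_mem_orb_kerOn hG hb hab (subset_orb_kerOn hbip hN ha hb hx)
  exact (adj_of_mem_orb_kerOn hG hx hxb.symm
    (subset_orb_kerOn hbip.symm (sup_comm (kerOn G Δ₀) _ ▸ hN) hb ha hy)).symm

theorem natCard_left_eq_right (hG : G ≤ autGroup Γ) (hconn : Γ.Connected)
    (hbip : IsBipartition Γ Δ₀ Δ₁) (htrans : VertexTrans G) (ha : a ∈ Δ₀) (hb : b ∈ Δ₁) :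
    Nat.card Δ₀ = Nat.card Δ₁ := by
  obtain ⟨g, hg, hga⟩ := htrans a b
  have hgΔ : g '' Δ₀ = Δ₁ := ((hbip.image_eq_or_swap hconn (hG hg)).resolve_left fun h =>
    Set.disjoint_left.1 hbip.disj (hga ▸ h.1 ▸ Set.mem_image_of_mem g ha) hb).1
  exact hgΔ ▸ (Nat.card_image_of_injective g.injective Δ₀).symm

end Kernel

theorem stmt6_general {V : Type*} [Fintype V] (Γ : SimpleGraph V) (G : Subgroup (Equiv.Perm V))
    (hG : G ≤ autGroup Γ) (hconn : Γ.Connected)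
    (hbqp : BiQuasiprimitive G) (Δ₀ Δ₁ : Set V) (hbip : IsBipartition Γ Δ₀ Δ₁)
    (hunf1 : ∃ σ ∈ plusStab G Δ₀ Δ₁, σ ≠ 1 ∧ ∀ v ∈ Δ₁, σ v = v) :
    ∃ n : ℕ, 2 ≤ n ∧ Nonempty (Γ ≃g completeBipartiteGraph (Fin n) (Fin n)) := by
  obtain ⟨σ, hσ, hσ1, hσΔ₁⟩ := hunf1
  obtain ⟨a, hσa⟩ : ∃ a, σ a ≠ a := not_forall.1 fun h => hσ1 (Equiv.ext h)
  have ha : a ∈ Δ₀ := by_contra fun ha => hσa (hσΔ₁ a (hbip.right_eq_compl ▸ ha))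
  have hσa₀ : σ a ∈ Δ₀ := hσ.1.2 ▸ Set.mem_image_of_mem σ ha
  have : Nontrivial V := ⟨⟨σ a, a, hσa⟩⟩
  obtain ⟨b, hab⟩ := exists_adj_iff_not_isIsolated.2 (hconn.preconnected.not_isIsolated a)
  have hb : b ∈ Δ₁ := (hbip.mem_left_iff_mem_right_of_adj hab).1 ha
  have hσK : σ ∈ kerOn G Δ₀ ⊔ kerOn G Δ₁ := Subgroup.mem_sup_right (mem_kerOn.2 ⟨hσ.1.1, hσΔ₁⟩)
  have hN : AtMostOrbits (kerOn G Δ₀ ⊔ kerOn G Δ₁) 2 :=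
    hbqp.2.1 _ (normalIn_kerOn_sup fun g hg => hbip.image_eq_or_swap hconn (hG hg))
      fun h => hσ1 (Subgroup.mem_bot.1 (h ▸ hσK))
  have hcard := natCard_left_eq_right hG hconn hbip hbqp.1 ha hb
  refine ⟨Nat.card Δ₀, Finite.one_lt_card_iff_nontrivial.2
    (Set.nontrivial_coe_sort.2 ⟨σ a, hσa₀, a, ha, hσa⟩), ?_⟩
  obtain ⟨e⟩ := hbip.nonempty_iso_completeBipartiteGraph fun x hx y hy =>
    adj_of_atMostOrbits_kerOn_sup hG hbip hN ha hab hx hy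
  exact ⟨e.trans (completeBipartiteGraphCongr (Finite.equivFinOfCardEq rfl)
    (Finite.equivFinOfCardEq hcard.symm))⟩

/-- **Lemma 2.8.** If `Γ` is a connected `G`-arc-transitive graph with `G`
bi-quasiprimitive on the vertices (so `Γ` is bipartite, with halves `Δ₀`, `Δ₁`), and the
setwise stabiliser `G⁺` of the halves is unfaithful on each half, then `Γ ≅ K_{n,n}`. -/
theorem stmt6 {V : Type*} [Fintype V] (Γ : SimpleGraph V) (G : Subgroup (Equiv.Perm V))
    (hG : G ≤ autGroup Γ) (hconn : Γ.Connected) (hat : ArcTrans Γ G)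
    (hbqp : BiQuasiprimitive G) (Δ₀ Δ₁ : Set V) (hbip : IsBipartition Γ Δ₀ Δ₁)
    (hunf0 : ∃ σ ∈ plusStab G Δ₀ Δ₁, σ ≠ 1 ∧ ∀ v ∈ Δ₀, σ v = v)
    (hunf1 : ∃ σ ∈ plusStab G Δ₀ Δ₁, σ ≠ 1 ∧ ∀ v ∈ Δ₁, σ v = v) :
    ∃ n : ℕ, 2 ≤ n ∧ Nonempty (Γ ≃g completeBipartiteGraph (Fin n) (Fin n)) :=
  stmt6_general Γ G hG hconn hbqp Δ₀ Δ₁ hbip hunf1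

end ATB
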